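/- arXiv:2205.00218 — 6 statements merged into one kernel-verified Lean document; each statement's English description precedes it below -/
import Mathlib

section
/- Let A ∈ ℝ^{n×n} be skew-symmetric and (C_i, A) a pair with observability matrix 𝒪_i of rank n - ν_i. Let D_i have orthonormal columns spanning im(𝒪_iᵀ) and U_i have orthonormal columns spanning ker(𝒪_i), and set T_i = [D_i U_i]. Then T_i is orthogonal, T_iᵀ A T_i is block diagonal, i.e., T_iᵀAT_i = diag(A_{io}, A_{iō}) with A_{io} ∈ ℝ^{(n-ν_i)×(n-ν_i)} and A_{iō} ∈ ℝ^{ν_i×ν_i}, and C_i T_i = [C_{io} 0]. -/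
open Matrix

/-- The observability matrix `𝒪 = col(C, CA, …, CA^{n-1})` of a pair `(C, A)`. -/
def obsMat {n m : ℕ} (C : Matrix (Fin m) (Fin n) ℝ) (A : Matrix (Fin n) (Fin n) ℝ) :
    Matrix (Fin n × Fin m) (Fin n) ℝ :=
  Matrix.of fun p j => (C * A ^ (p.1 : ℕ)) p.2 j

/-!
By Cayley–Hamilton every power `A ^ k` is a combination of `A ^ i` with `i < n`, so
`𝒪 X = 0` forces `C A^k X = 0` for all `k`. Hence `ker 𝒪` lies in `ker C` and is
`A`-invariant; being orthogonal to `im 𝒪ᵀ`, this gives `Dᵀ U = 0`, `Dᵀ A U = 0` and `C U = 0`.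
Skew-symmetry turns `Dᵀ A U = 0` into `Uᵀ A D = 0`, killing the other off-diagonal block.
-/

namespace Matrix

theorem pow_mem_span_pow_lt_card {R ι : Type*} [CommRing R] [Nontrivial R] [Fintype ι]
    [DecidableEq ι] (A : Matrix ι ι R) (k : ℕ) :
    A ^ k ∈ Submodule.span R ((A ^ ·) '' Set.Iio (Fintype.card ι)) := by
  rw [pow_eq_aeval_mod_charpoly, Polynomial.aeval_eq_sum_range]
  refine Submodule.sum_mem _ fun i _ => ?_
  by_cases hi : (Polynomial.X ^ k %ₘ A.charpoly).coeff i = 0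
  · simp [hi]
  · refine Submodule.smul_mem _ _ (Submodule.subset_span ⟨i, ?_, rfl⟩)
    have := (Polynomial.le_degree_of_ne_zero hi).trans_lt
      (Polynomial.degree_modByMonic_lt _ A.charpoly_monic)
    rw [charpoly_degree_eq_dim] at this
    exact_mod_cast this

variable {R l m n : Type*} [CommSemiring R] [Fintype m] [Fintype n]

theorem mul_eq_zero_iff_range_le_ker [DecidableEq n]
    {N : Matrix l m R} {M : Matrix m n R} :
    N * M = 0 ↔ LinearMap.range M.mulVecLin ≤ LinearMap.ker N.mulVecLin := by
  rw [LinearMap.range_le_ker_iff, ← mulVecLin_mul, ← toLin'_apply', map_eq_zero_iff _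
    toLin'.injective]

theorem exists_eq_mul_of_range_le [DecidableEq n] {M : Matrix l n R} {N : Matrix l m R}
    (h : LinearMap.range M.mulVecLin ≤ LinearMap.range N.mulVecLin) :
    ∃ Y : Matrix m n R, M = N * Y := by
  have hcol : ∀ j, ∃ y, N *ᵥ y = M.col j := fun j =>
    h ⟨Pi.single j 1, mulVec_single_one M j⟩
  choose y hy using hcol
  refine ⟨(of y)ᵀ, ?_⟩
  ext i j
  exact (congrFun (hy j) i).symm

theorem transpose_mul_eq_zero_of_range_le {k p q : Type*} [Fintype k] [Fintype l]
    [Fintype p] [DecidableEq k] {D : Matrix l k R} {N : Matrix p l R} {M : Matrix l q R}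
    (hD : LinearMap.range D.mulVecLin ≤ LinearMap.range Nᵀ.mulVecLin) (hM : N * M = 0) :
    Dᵀ * M = 0 := by
  obtain ⟨Y, rfl⟩ := exists_eq_mul_of_range_le hD
  rw [transpose_mul, transpose_transpose, Matrix.mul_assoc, hM, Matrix.mul_zero]

end Matrix

section Observability

variable {n m : ℕ} {C : Matrix (Fin m) (Fin n) ℝ} {A : Matrix (Fin n) (Fin n) ℝ}
  {κ : Type*} {X : Matrix (Fin n) κ ℝ}

theorem obsMat_mul_eq_zero_iff : obsMat C A * X = 0 ↔ ∀ k : ℕ, C * A ^ k * X = 0 := by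
  have hblock : ∀ (i : Fin n) r c, (obsMat C A * X) (i, r) c = (C * A ^ (i : ℕ) * X) r c :=
    fun _ _ _ => rfl
  refine ⟨fun h k => ?_, fun h => ?_⟩
  · have hspan := A.pow_mem_span_pow_lt_card k
    generalize A ^ k = P at hspan ⊢
    induction hspan using Submodule.span_induction with
    | mem M hM =>
      obtain ⟨i, hi, rfl⟩ := hM
      ext r c
      simpa [hblock] using congrFun (congrFun h (⟨i, by simpa using hi⟩, r)) c
    | zero => simp
    | add M N _ _ hM hN => rw [Matrix.mul_add, Matrix.add_mul, hM, hN, add_zero]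
    | smul a M _ hM => rw [Matrix.mul_smul, Matrix.smul_mul, hM, smul_zero]
  · ext ⟨i, r⟩ c
    rw [hblock, h]
    rfl

theorem mul_eq_zero_of_obsMat_mul_eq_zero (h : obsMat C A * X = 0) : C * X = 0 := by
  simpa using obsMat_mul_eq_zero_iff.1 h 0

theorem obsMat_mul_mul_eq_zero (h : obsMat C A * X = 0) : obsMat C A * (A * X) = 0 :=
  obsMat_mul_eq_zero_iff.2 fun k => by
    rw [← Matrix.mul_assoc, Matrix.mul_assoc C, ← pow_succ, obsMat_mul_eq_zero_iff.1 h]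

end Observability

theorem kalman_decomposition_skew_general
    {n m ν : ℕ}
    (A : Matrix (Fin n) (Fin n) ℝ) (hA : Aᵀ = -A)
    (C : Matrix (Fin m) (Fin n) ℝ)
    (D : Matrix (Fin n) (Fin (n - ν)) ℝ) (U : Matrix (Fin n) (Fin ν) ℝ)
    (hD : Dᵀ * D = 1)
    (hDspan : LinearMap.range D.mulVecLin = LinearMap.range (obsMat C A)ᵀ.mulVecLin)
    (hU : Uᵀ * U = 1)
    (hUspan : LinearMap.range U.mulVecLin = LinearMap.ker (obsMat C A).mulVecLin) :
    (Matrix.fromCols D U)ᵀ * Matrix.fromCols D U = 1 ∧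
    ∃ (Ao : Matrix (Fin (n - ν)) (Fin (n - ν)) ℝ) (Aobar : Matrix (Fin ν) (Fin ν) ℝ)
      (Co : Matrix (Fin m) (Fin (n - ν)) ℝ),
      (Matrix.fromCols D U)ᵀ * A * Matrix.fromCols D U = Matrix.fromBlocks Ao 0 0 Aobar ∧
      C * Matrix.fromCols D U = Matrix.fromCols Co 0 := by
  have hObsU : obsMat C A * U = 0 := mul_eq_zero_iff_range_le_ker.2 hUspan.le
  have hDU : Dᵀ * U = 0 := transpose_mul_eq_zero_of_range_le hDspan.le hObsU
  have hDAU : Dᵀ * (A * U) = 0 :=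
    transpose_mul_eq_zero_of_range_le hDspan.le (obsMat_mul_mul_eq_zero hObsU)
  have hUAD : Uᵀ * (A * D) = 0 := by
    have hskew : Uᵀ * (A * D) = -(Dᵀ * (A * U))ᵀ := by
      simp [transpose_mul, hA, Matrix.mul_assoc]
    rw [hskew, hDAU, transpose_zero, neg_zero]
  have hUD : Uᵀ * D = 0 := by rw [← transpose_transpose D, ← transpose_mul, hDU, transpose_zero]
  refine ⟨?_, Dᵀ * A * D, Uᵀ * A * U, C * D, ?_, ?_⟩
  · rw [transpose_fromCols, fromRows_mul_fromCols, hD, hU, hDU, hUD, ← fromBlocks_one]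
  · rw [transpose_fromCols, Matrix.mul_assoc, mul_fromCols, fromRows_mul_fromCols, hDAU, hUAD,
      Matrix.mul_assoc, Matrix.mul_assoc]
  · rw [mul_fromCols, mul_eq_zero_of_obsMat_mul_eq_zero hObsU]

/-- Kalman-type decomposition for a skew-symmetric `A`: with `D` an orthonormal basis of
`im(𝒪ᵀ)`, `U` an orthonormal basis of `ker 𝒪`, and `T = [D U]`, the matrix `T` is
orthogonal, `TᵀAT` is block diagonal, and `CT = [C_o 0]`. -/
theorem kalman_decomposition_skew
    {n m ν : ℕ} (hν : ν ≤ n)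
    (A : Matrix (Fin n) (Fin n) ℝ) (hA : Aᵀ = -A)
    (C : Matrix (Fin m) (Fin n) ℝ)
    (hrank : (obsMat C A).rank = n - ν)
    (D : Matrix (Fin n) (Fin (n - ν)) ℝ) (U : Matrix (Fin n) (Fin ν) ℝ)
    (hD : Dᵀ * D = 1)
    (hDspan : LinearMap.range D.mulVecLin = LinearMap.range (obsMat C A)ᵀ.mulVecLin)
    (hU : Uᵀ * U = 1)
    (hUspan : LinearMap.range U.mulVecLin = LinearMap.ker (obsMat C A).mulVecLin) :
    (Matrix.fromCols D U)ᵀ * Matrix.fromCols D U = 1 ∧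
    ∃ (Ao : Matrix (Fin (n - ν)) (Fin (n - ν)) ℝ) (Aobar : Matrix (Fin ν) (Fin ν) ℝ)
      (Co : Matrix (Fin m) (Fin (n - ν)) ℝ),
      (Matrix.fromCols D U)ᵀ * A * Matrix.fromCols D U = Matrix.fromBlocks Ao 0 0 Aobar ∧
      C * Matrix.fromCols D U = Matrix.fromCols Co 0 :=
  kalman_decomposition_skew_general A hA C D U hD hDspan hU hUspan
end

section
/- Let A ∈ ℝ^{n×n} be a matrix, C_i ∈ ℝ^{m_i×n} for i = 1,…,N with observability matrices 𝒪_i, and suppose the stacked pair (C, A) with C = col(C_1,…,C_N) is observable. Let U_i ∈ ℝ^{n×ν_i} have full column rank with im(U_i) = ker(𝒪_i), and let U = blockdiag(U_1,…,U_N) ∈ ℝ^{Nn×ν}, ν = Σν_i. Let L be a symmetric positive semi-definite matrix whose kernel is spanned by 1_N. Then the matrix Uᵀ(L ⊗ I_n)U is symmetric positive definite. -/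
open Matrix Kronecker

/-- The block diagonal matrix `U = blockdiag(U₁, …, U_N)` with `Uᵢ : ℝ^{n×νᵢ}`. -/
def blockDiagU {N n : ℕ} {ν : Fin N → ℕ} (U : ∀ i, Matrix (Fin n) (Fin (ν i)) ℝ) :
    Matrix (Fin N × Fin n) ((i : Fin N) × Fin (ν i)) ℝ :=
  Matrix.of fun p q => if p.1 = q.1 then U q.1 p.2 q.2 else 0

/-!
For a positive semidefinite `K`, the form `x ↦ (Bx)ᴴ K (Bx)` vanishes only where `K B x = 0`, so
`Bᴴ K B` is definite as soon as `K ∘ B` is injective. A kernel vector of `L ⊗ Iₙ` has all `N` blocks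
equal, since `ker L = span 1`; for `y = U x` this says `Uᵢ xᵢ = z` for every `i`. Then `z` lies in
every `ker 𝒪ᵢ`, so `z = 0` by observability, and `x = 0` because each `Uᵢ` is injective.
-/

namespace Matrix

section PosSemidef

open scoped ComplexOrder

variable {𝕜 ι κ : Type*} [RCLike 𝕜] [Fintype ι] [Fintype κ]

theorem PosSemidef.posDef_conjTranspose_mul_mul {K : Matrix ι ι 𝕜} (hK : K.PosSemidef)
    {B : Matrix ι κ 𝕜} (hB : ∀ x, K *ᵥ (B *ᵥ x) = 0 → x = 0) : (Bᴴ * K * B).PosDef := by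
  have hBKB := hK.conjTranspose_mul_mul_same B
  refine PosDef.of_dotProduct_mulVec_pos hBKB.1 fun x hx => ?_
  have hquad : star x ⬝ᵥ (Bᴴ * K * B) *ᵥ x = star (B *ᵥ x) ⬝ᵥ K *ᵥ (B *ᵥ x) := by
    simp only [star_mulVec, dotProduct_mulVec, vecMul_vecMul, mulVec_mulVec, Matrix.mul_assoc]
  refine (hBKB.dotProduct_mulVec_nonneg x).lt_of_ne fun h => hx (hB x ?_)
  rwa [← hK.dotProduct_mulVec_zero_iff, ← hquad, eq_comm]

end PosSemidef

section Kronecker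

variable {R ι κ : Type*} [Fintype ι] [Fintype κ] [DecidableEq κ]

theorem kronecker_one_mulVec_apply [NonAssocSemiring R] (L : Matrix ι ι R) (y : ι × κ → R)
    (a : ι) (j : κ) : ((L ⊗ₖ (1 : Matrix κ κ R)) *ᵥ y) (a, j) = (L *ᵥ fun b => y (b, j)) a := by
  simp [mulVec, dotProduct, Fintype.sum_prod_type, one_apply]

theorem exists_const_of_kronecker_one_mulVec_eq_zero [CommSemiring R] {L : Matrix ι ι R}
    (hL : LinearMap.ker L.mulVecLin ≤ Submodule.span R {fun _ => 1}) {y : ι × κ → R}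
    (hy : (L ⊗ₖ (1 : Matrix κ κ R)) *ᵥ y = 0) : ∃ z : κ → R, ∀ a j, y (a, j) = z j := by
  have hcol (j : κ) : (fun b => y (b, j)) ∈ Submodule.span R {fun _ => 1} := by
    refine hL ?_
    rw [LinearMap.mem_ker, mulVecLin_apply]
    funext a
    rw [← kronecker_one_mulVec_apply, hy, Pi.zero_apply, Pi.zero_apply]
  choose z hz using fun j => Submodule.mem_span_singleton.mp (hcol j)
  exact ⟨z, fun a j => by simpa using (congrFun (hz j) a).symm⟩

end Kronecker

end Matrix

theorem blockDiagU_mulVec_apply {N n : ℕ} {ν : Fin N → ℕ}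
    (U : ∀ i, Matrix (Fin n) (Fin (ν i)) ℝ) (x : (i : Fin N) × Fin (ν i) → ℝ) (i : Fin N)
    (j : Fin n) : (blockDiagU U *ᵥ x) (i, j) = (U i *ᵥ fun k => x ⟨i, k⟩) j := by
  have huniv : (Finset.univ : Finset ((i : Fin N) × Fin (ν i)))
      = Finset.univ.sigma fun _ => Finset.univ := rfl
  simp only [blockDiagU, mulVec, dotProduct, of_apply, huniv, Finset.sum_sigma]
  simp [ite_mul]

/-- If `(C, A)` is collectively observable, `im(Uᵢ) = ker 𝒪ᵢ` with `Uᵢ` of full column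
rank, and `L` is a symmetric PSD matrix with kernel spanned by `1_N`, then
`Uᵀ (L ⊗ I_n) U` is (symmetric) positive definite. -/
theorem UT_L_kron_U_posdef
    {N n : ℕ} {m ν : Fin N → ℕ}
    (A : Matrix (Fin n) (Fin n) ℝ)
    (C : ∀ i, Matrix (Fin (m i)) (Fin n) ℝ)
    (hobs : ⨅ i, LinearMap.ker (obsMat (C i) A).mulVecLin = ⊥)
    (U : ∀ i, Matrix (Fin n) (Fin (ν i)) ℝ)
    (hUrank : ∀ i, Function.Injective (U i).mulVecLin)
    (hUker : ∀ i, LinearMap.range (U i).mulVecLin = LinearMap.ker (obsMat (C i) A).mulVecLin)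
    (L : Matrix (Fin N) (Fin N) ℝ)
    (hL : L.PosSemidef)
    (hkerL : LinearMap.ker L.mulVecLin = Submodule.span ℝ {fun _ => (1 : ℝ)}) :
    ((blockDiagU U)ᵀ * (L ⊗ₖ (1 : Matrix (Fin n) (Fin n) ℝ)) * blockDiagU U).PosDef := by
  rw [← conjTranspose_eq_transpose_of_trivial]
  refine (hL.kronecker PosSemidef.one).posDef_conjTranspose_mul_mul fun x hx => ?_
  obtain ⟨z, hz⟩ := exists_const_of_kronecker_one_mulVec_eq_zero hkerL.le hx
  have hUz (i : Fin N) : U i *ᵥ (fun k => x ⟨i, k⟩) = z :=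
    funext fun j => by rw [← blockDiagU_mulVec_apply, hz]
  have hz0 : z = 0 := by
    rw [← Submodule.mem_bot ℝ, ← hobs, Submodule.mem_iInf]
    exact fun i => hUker i ▸ ⟨_, hUz i⟩
  funext ⟨i, k⟩
  have hxi : (U i).mulVecLin (fun k => x ⟨i, k⟩) = (U i).mulVecLin 0 := by
    rw [mulVecLin_apply, hUz, hz0, map_zero]
  exact congrFun (hUrank i hxi) k
end

section
/- Consider the linear time-varying system η̇(t) = -Q Uᵀ(L_{σ(t)} ⊗ I_n)U η(t) where Q is symmetric positive definite. Assume joint connectivity and collective observability so that the observability Gramian bound α₁I ≤ G_η(t*, t*+T_o) ≤ α₂I holds for the output y = (L_{σ(t)}^{1/2} ⊗ I_n)Uη. Then the system is exponentially stable: there exist c, λ > 0 such that ‖η(t)‖ ≤ c e^{-λ(t-t₀)}‖η(t₀)‖ for all t ≥ t₀ ≥ 0 and all initial conditions. -/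
/-!
Along a solution of `η' = -Q M(t) η`, the function `V = ηᵀ Q⁻¹ η` has derivative
`-2 ηᵀ M(t) η ≤ 0`, because `(-QM)ᵀ Q⁻¹ + Q⁻¹ (-QM) = -2M`. On a window `[a, a + T_o]` the solution
is `Φ(·, a) η(a)`, so the decrease of `V` over the window is twice the observability Gramian's
quadratic form at `η(a)`, hence at least `2 α₁ ‖η(a)‖²`. As `V` is comparable to `‖η‖²`, it
contracts by a fixed factor `ρ < 1` over every window, which yields exponential decay.
-/

open Matrix Kronecker
open scoped MatrixOrder

theorem add_le_of_hasDerivAt_neg_of_le_integral {V W : ℝ → ℝ} (hV : ∀ t, HasDerivAt V (-W t) t)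
    (hW : ∀ t, 0 ≤ W t) {a b β : ℝ} (hab : a ≤ b) (hβ : β ≤ ∫ t in a..b, W t) :
    V b + β ≤ V a := by
  have hanti : Antitone V := antitone_of_hasDerivAt_nonpos hV fun t => neg_nonpos.2 (hW t)
  by_cases hint : IntervalIntegrable W MeasureTheory.volume a b
  · have hftc := intervalIntegral.integral_eq_sub_of_hasDerivAt (fun t _ => hV t) hint.neg
    rw [intervalIntegral.integral_neg] at hftc
    linarith
  · -- a non-integrable `W` has integral `0`, so `β ≤ 0` and monotonicity of `V` suffices
    rw [intervalIntegral.integral_undef hint] at hβ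
    linarith [hanti hab]

theorem Antitone.le_inv_mul_exp_mul_of_le_mul_add {V : ℝ → ℝ} (hV : Antitone V) {T ρ : ℝ}
    (hT : 0 < T) (hρ₀ : 0 < ρ) (hρ₁ : ρ ≤ 1) (hstep : ∀ a, 0 ≤ a → V (a + T) ≤ ρ * V a)
    {t₀ t : ℝ} (ht₀ : 0 ≤ t₀) (ht : t₀ ≤ t) (hV₀ : 0 ≤ V t₀) :
    V t ≤ ρ⁻¹ * Real.exp (Real.log ρ / T * (t - t₀)) * V t₀ := by
  have hiter : ∀ k : ℕ, V (t₀ + k * T) ≤ ρ ^ k * V t₀ := by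
    intro k
    induction k with
    | zero => simp
    | succ k ih =>
      calc V (t₀ + (k + 1 : ℕ) * T) = V ((t₀ + k * T) + T) := by push_cast; ring_nf
        _ ≤ ρ * V (t₀ + k * T) := hstep _ (by positivity)
        _ ≤ ρ * (ρ ^ k * V t₀) := by gcongr
        _ = ρ ^ (k + 1) * V t₀ := by ring
  set k := ⌊(t - t₀) / T⌋₊
  have hk : (t - t₀) / T - 1 < k := by linarith [Nat.lt_floor_add_one ((t - t₀) / T)]
  have hkT : t₀ + k * T ≤ t := by
    have := Nat.floor_le (div_nonneg (sub_nonneg.2 ht) hT.le)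
    rw [le_div_iff₀ hT] at this
    linarith
  have hρk : ρ ^ k ≤ ρ⁻¹ * Real.exp (Real.log ρ / T * (t - t₀)) := by
    have hlog : Real.log ρ ≤ 0 := Real.log_nonpos hρ₀.le hρ₁
    calc ρ ^ k = Real.exp (k * Real.log ρ) := by
          rw [← Real.log_pow, Real.exp_log (pow_pos hρ₀ k)]
      _ ≤ Real.exp (((t - t₀) / T - 1) * Real.log ρ) :=
          Real.exp_le_exp.2 (mul_le_mul_of_nonpos_right hk.le hlog)
      _ = ρ⁻¹ * Real.exp (Real.log ρ / T * (t - t₀)) := by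
          rw [← Real.exp_log (inv_pos.2 hρ₀), ← Real.exp_add, Real.log_inv]
          congr 1
          field_simp
          ring
  calc V t ≤ V (t₀ + k * T) := hV hkT
    _ ≤ ρ ^ k * V t₀ := hiter k
    _ ≤ _ := by gcongr

theorem exists_norm_le_exp_of_lyapunov {E : Type*} [SeminormedAddCommGroup E] {c₁ c₂ β T : ℝ}
    (hc₁ : 0 < c₁) (hc₂ : 0 < c₂) (hβ : 0 < β) (hT : 0 < T) :
    ∃ c lam : ℝ, 0 < c ∧ 0 < lam ∧ ∀ (x : ℝ → E) (V : ℝ → ℝ), Antitone V →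
      (∀ t, c₁ * ‖x t‖ ^ 2 ≤ V t) → (∀ t, V t ≤ c₂ * ‖x t‖ ^ 2) →
      (∀ a, 0 ≤ a → V (a + T) + β * ‖x a‖ ^ 2 ≤ V a) →
      ∀ t₀ t, 0 ≤ t₀ → t₀ ≤ t → ‖x t‖ ≤ c * Real.exp (-lam * (t - t₀)) * ‖x t₀‖ := by
  set ρ := max (1 - β / c₂) (1 / 2)
  have hρ₀ : 0 < ρ := lt_max_of_lt_right one_half_pos
  have hρ₁ : ρ < 1 := max_lt (by linarith [div_pos hβ hc₂]) one_half_lt_one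
  refine ⟨√(c₂ / (c₁ * ρ)), -Real.log ρ / (2 * T), by positivity,
    div_pos (neg_pos.2 (Real.log_neg hρ₀ hρ₁)) (by positivity), ?_⟩
  intro x V hV hlow hup hwindow t₀ t ht₀ ht
  have hV₀ : ∀ t, 0 ≤ V t := fun t => (by positivity : 0 ≤ c₁ * ‖x t‖ ^ 2).trans (hlow t)
  have hstep : ∀ a, 0 ≤ a → V (a + T) ≤ ρ * V a := by
    intro a ha
    have hβV : β / c₂ * V a ≤ β * ‖x a‖ ^ 2 := by
      rw [div_mul_eq_mul_div, div_le_iff₀ hc₂]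
      nlinarith [hup a]
    linarith [hwindow a ha, mul_le_mul_of_nonneg_right (le_max_left (1 - β / c₂) (1 / 2)) (hV₀ a)]
  have hdecay := hV.le_inv_mul_exp_mul_of_le_mul_add hT hρ₀ hρ₁.le hstep ht₀ ht (hV₀ t₀)
  have hexp : Real.exp (-(-Real.log ρ / (2 * T)) * (t - t₀)) ^ 2
      = Real.exp (Real.log ρ / T * (t - t₀)) := by
    rw [← Real.exp_nat_mul]
    congr 1
    field_simp
    ring
  rw [← pow_le_pow_iff_left₀ (norm_nonneg _) (by positivity) two_ne_zero]
  calc ‖x t‖ ^ 2 ≤ V t / c₁ := by rw [le_div_iff₀ hc₁]; linarith [hlow t]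
    _ ≤ ρ⁻¹ * Real.exp (Real.log ρ / T * (t - t₀)) * (c₂ * ‖x t₀‖ ^ 2) / c₁ := by
        gcongr
        exact hdecay.trans (by gcongr; exact hup t₀)
    _ = _ := by
        rw [mul_pow, mul_pow, Real.sq_sqrt (by positivity), hexp]
        field_simp

section Matrices

variable {ι : Type*} [Fintype ι]

lemma Matrix.dotProduct_mulVec_mono {A B : Matrix ι ι ℝ} (h : A ≤ B) (x : ι → ℝ) :
    x ⬝ᵥ A *ᵥ x ≤ x ⬝ᵥ B *ᵥ x := by
  have := (Matrix.le_iff.mp h).dotProduct_mulVec_nonneg x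
  rw [star_trivial, sub_mulVec, dotProduct_sub] at this
  linarith

variable [DecidableEq ι]

lemma Matrix.dotProduct_algebraMap_mulVec (r : ℝ) (x : ι → ℝ) :
    x ⬝ᵥ algebraMap ℝ (Matrix ι ι ℝ) r *ᵥ x = r * (x ⬝ᵥ x) := by
  rw [Algebra.algebraMap_eq_smul_one, smul_mulVec, one_mulVec, dotProduct_smul, smul_eq_mul]

theorem Matrix.PosDef.exists_pos_quadratic_bounds {P : Matrix ι ι ℝ} (hP : P.PosDef) :
    ∃ r₁ r₂ : ℝ, 0 < r₁ ∧ 0 < r₂ ∧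
      ∀ x : ι → ℝ, r₁ * (x ⬝ᵥ x) ≤ x ⬝ᵥ P *ᵥ x ∧ x ⬝ᵥ P *ᵥ x ≤ r₂ * (x ⬝ᵥ x) := by
  cases isEmpty_or_nonempty ι
  · exact ⟨1, 1, one_pos, one_pos, fun x => by simp [dotProduct]⟩
  obtain ⟨r₁, hr₁, hPr₁⟩ := (CFC.exists_pos_algebraMap_le_iff hP.isHermitian.isSelfAdjoint).2
    fun x hx => hP.isStrictlyPositive.spectrum_pos hx
  obtain ⟨r, hr⟩ := (finite_real_spectrum (A := P)).bddAbove
  have hPr₂ : P ≤ algebraMap ℝ _ (max r 1) :=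
    le_algebraMap_of_spectrum_le (fun x hx => (hr hx).trans (le_max_left r 1))
      hP.isHermitian.isSelfAdjoint
  refine ⟨r₁, max r 1, hr₁, by positivity, fun x => ⟨?_, ?_⟩⟩
  · simpa only [dotProduct_algebraMap_mulVec] using dotProduct_mulVec_mono hPr₁ x
  · simpa only [dotProduct_algebraMap_mulVec] using dotProduct_mulVec_mono hPr₂ x

lemma hasDerivAt_dotProduct_mulVec {P A : Matrix ι ι ℝ} {η : ℝ → EuclideanSpace ℝ ι} {t : ℝ}
    (hη : HasDerivAt η (toEuclideanLin A (η t)) t) :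
    HasDerivAt (fun s => (η s).ofLp ⬝ᵥ P *ᵥ (η s).ofLp)
      ((η t).ofLp ⬝ᵥ (Aᵀ * P + P * A) *ᵥ (η t).ofLp) t := by
  have hPη := (toEuclideanCLM (𝕜 := ℝ) P).hasFDerivAt.comp_hasDerivAt t hη
  refine ((hη.inner ℝ hPη).congr_deriv ?_).congr_of_eventuallyEq
    (.of_eq (funext fun s => (inner_toEuclideanCLM P (η s) (η s)).symm))
  rw [Function.comp_apply, inner_toEuclideanCLM, inner_toEuclideanCLM, toLpLin_apply, add_mulVec,
    dotProduct_add, ← mulVec_mulVec, dotProduct_mulVec _ Aᵀ, vecMul_transpose, ← mulVec_mulVec,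
    add_comm]

lemma Matrix.transpose_mul_inv_add_inv_mul_neg_mul {Q M : Matrix ι ι ℝ} (hQ : Qᵀ = Q)
    (hQu : IsUnit Q.det) (hM : Mᵀ = M) : (-(Q * M))ᵀ * Q⁻¹ + Q⁻¹ * -(Q * M) = -(2 : ℝ) • M := by
  rw [transpose_neg, transpose_mul, hQ, hM, neg_mul, mul_neg, Matrix.mul_assoc,
    mul_nonsing_inv Q hQu, ← Matrix.mul_assoc, nonsing_inv_mul Q hQu, Matrix.mul_one,
    Matrix.one_mul]
  module

theorem ODE_solution_unique_of_finite_range {A : ℝ → Matrix ι ι ℝ} (hA : (Set.range A).Finite)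
    {f g : ℝ → EuclideanSpace ℝ ι}
    (hf : ∀ t, HasDerivAt f (toEuclideanLin (A t) (f t)) t)
    (hg : ∀ t, HasDerivAt g (toEuclideanLin (A t) (g t)) t) {a b : ℝ} (ha : f a = g a) :
    Set.EqOn f g (Set.Icc a b) := by
  let K := hA.toFinset.sup fun B : Matrix ι ι ℝ => ‖toEuclideanCLM (𝕜 := ℝ) B‖₊
  have hK : ∀ t, LipschitzWith K (toEuclideanCLM (𝕜 := ℝ) (A t)) := fun t =>
    (toEuclideanCLM (𝕜 := ℝ) (A t)).lipschitz.weaken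
      (Finset.le_sup (f := fun B : Matrix ι ι ℝ => ‖toEuclideanCLM (𝕜 := ℝ) B‖₊) (by simp))
  exact ODE_solution_unique hK (HasDerivAt.continuousOn fun t _ => hf t)
    (fun t _ => (hf t).hasDerivWithinAt) (HasDerivAt.continuousOn fun t _ => hg t)
    (fun t _ => (hg t).hasDerivWithinAt) ha

theorem exists_exp_decay_of_gramian_lower_bound {Q : Matrix ι ι ℝ} (hQ : Q.PosDef)
    {M : ℝ → Matrix ι ι ℝ} (hM : ∀ t, (M t).PosSemidef) (hMfin : (Set.range M).Finite)
    {Φ : ℝ → ℝ → Matrix ι ι ℝ} (hΦ0 : ∀ s, Φ s s = 1)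
    (hΦd : ∀ (s : ℝ) (w : EuclideanSpace ℝ ι) (t : ℝ),
      HasDerivAt (fun u => toEuclideanLin (Φ u s) w) (toEuclideanLin (-(Q * M t) * Φ t s) w) t)
    {To α : ℝ} (hTo : 0 < To) (hα : 0 < α)
    (hGram : ∀ a : ℝ, 0 ≤ a → ∀ v : ι → ℝ,
      α * (∑ i, v i ^ 2) ≤ ∫ t in a..(a + To), (Φ t a *ᵥ v) ⬝ᵥ (M t *ᵥ (Φ t a *ᵥ v))) :
    ∃ c lam : ℝ, 0 < c ∧ 0 < lam ∧ ∀ η : ℝ → EuclideanSpace ℝ ι,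
      (∀ t, HasDerivAt η (toEuclideanLin (-(Q * M t)) (η t)) t) →
      ∀ t₀ t : ℝ, 0 ≤ t₀ → t₀ ≤ t → ‖η t‖ ≤ c * Real.exp (-lam * (t - t₀)) * ‖η t₀‖ := by
  have hnorm : ∀ x : EuclideanSpace ℝ ι, ‖x‖ ^ 2 = x.ofLp ⬝ᵥ x.ofLp := fun x => by
    rw [← real_inner_self_eq_norm_sq, EuclideanSpace.inner_eq_star_dotProduct, star_trivial]
  obtain ⟨c₁, c₂, hc₁, hc₂, hbounds⟩ := hQ.inv.exists_pos_quadratic_bounds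
  obtain ⟨c, lam, hc, hlam, hdecay⟩ := exists_norm_le_exp_of_lyapunov (E := EuclideanSpace ℝ ι)
    hc₁ hc₂ (by positivity : 0 < 2 * α) hTo
  refine ⟨c, lam, hc, hlam, fun η hη => ?_⟩
  let W s := (η s).ofLp ⬝ᵥ M s *ᵥ (η s).ofLp
  have hW : ∀ s, 0 ≤ 2 * W s := fun s => by
    simpa [W] using mul_nonneg zero_le_two ((hM s).dotProduct_mulVec_nonneg (η s).ofLp)
  have hQsymm : Qᵀ = Q := by simpa using hQ.isHermitian.eq
  have hV : ∀ t, HasDerivAt (fun s => (η s).ofLp ⬝ᵥ Q⁻¹ *ᵥ (η s).ofLp) (-(2 * W t)) t := by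
    intro t
    convert hasDerivAt_dotProduct_mulVec (P := Q⁻¹) (hη t) using 1
    rw [transpose_mul_inv_add_inv_mul_neg_mul hQsymm (isUnit_iff_ne_zero.2 hQ.det_pos.ne')
      (by simpa using (hM t).isHermitian.eq)]
    simp only [W, smul_mulVec, dotProduct_smul, smul_eq_mul]
    ring
  have hsol : ∀ a b, Set.EqOn η (fun s => toEuclideanLin (Φ s a) (η a)) (Set.Icc a b) := by
    intro a b
    refine ODE_solution_unique_of_finite_range ?_ hη (fun t => ?_) (by simp [hΦ0])
    · exact (hMfin.image fun B => -(Q * B)).subset (Set.range_comp (fun B => -(Q * B)) M).subset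
    · simpa [toLpLin_apply, mulVec_mulVec] using hΦd a (η a) t
  refine hdecay η _ (antitone_of_hasDerivAt_nonpos hV fun t => neg_nonpos.2 (hW t))
    (fun t => by simpa [hnorm] using (hbounds (η t).ofLp).1)
    (fun t => by simpa [hnorm] using (hbounds (η t).ofLp).2) fun a ha => ?_
  refine add_le_of_hasDerivAt_neg_of_le_integral hV hW (by linarith) ?_
  have hWΦ : Set.EqOn W (fun t => (Φ t a *ᵥ (η a).ofLp) ⬝ᵥ (M t *ᵥ (Φ t a *ᵥ (η a).ofLp)))
      (Set.uIcc a (a + To)) := fun t ht => by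
    rw [Set.uIcc_of_le (by linarith)] at ht
    simp [W, hsol a (a + To) ht]
  rw [intervalIntegral.integral_const_mul, intervalIntegral.integral_congr hWΦ, mul_assoc]
  refine mul_le_mul_of_nonneg_left ?_ zero_le_two
  simpa [EuclideanSpace.norm_sq_eq] using hGram a ha (η a).ofLp

end Matrices

theorem eta_system_exponentially_stable_general
    {N n n₀ νt : ℕ}
    (U : Matrix (Fin N × Fin n) (Fin νt) ℝ)
    (Lap : Fin n₀ → Matrix (Fin N) (Fin N) ℝ)
    (hLap : ∀ p, (Lap p).PosSemidef)
    (σ : ℝ → Fin n₀)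
    (Q : Matrix (Fin νt) (Fin νt) ℝ) (hQ : Q.PosDef)
    (Φ : ℝ → ℝ → Matrix (Fin νt) (Fin νt) ℝ)
    (hΦ0 : ∀ s, Φ s s = 1)
    (hΦd : ∀ (s : ℝ) (w : EuclideanSpace ℝ (Fin νt)) (t : ℝ),
      HasDerivAt (fun u => Matrix.toEuclideanLin (Φ u s) w)
        (Matrix.toEuclideanLin
          (-(Q * (Uᵀ * (Lap (σ t) ⊗ₖ (1 : Matrix (Fin n) (Fin n) ℝ)) * U)) * Φ t s) w) t)
    (To α₁ α₂ : ℝ) (hTo : 0 < To) (hα₁ : 0 < α₁)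
    (hGram : ∀ tstar : ℝ, 0 ≤ tstar → ∀ v : Fin νt → ℝ,
      α₁ * (∑ i, v i ^ 2) ≤
        (∫ t in tstar..(tstar + To),
          ((Φ t tstar).mulVec v) ⬝ᵥ
            ((Uᵀ * (Lap (σ t) ⊗ₖ (1 : Matrix (Fin n) (Fin n) ℝ)) * U).mulVec
              ((Φ t tstar).mulVec v))) ∧
      (∫ t in tstar..(tstar + To),
          ((Φ t tstar).mulVec v) ⬝ᵥ
            ((Uᵀ * (Lap (σ t) ⊗ₖ (1 : Matrix (Fin n) (Fin n) ℝ)) * U).mulVec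
              ((Φ t tstar).mulVec v))) ≤ α₂ * (∑ i, v i ^ 2)) :
    ∃ c lam : ℝ, 0 < c ∧ 0 < lam ∧
      ∀ η : ℝ → EuclideanSpace ℝ (Fin νt),
        (∀ t, HasDerivAt η
          (Matrix.toEuclideanLin
            (-(Q * (Uᵀ * (Lap (σ t) ⊗ₖ (1 : Matrix (Fin n) (Fin n) ℝ)) * U))) (η t)) t) →
        ∀ t₀ t : ℝ, 0 ≤ t₀ → t₀ ≤ t →
          ‖η t‖ ≤ c * Real.exp (-lam * (t - t₀)) * ‖η t₀‖ := by
  have hM : ∀ p, (Uᵀ * (Lap p ⊗ₖ (1 : Matrix (Fin n) (Fin n) ℝ)) * U).PosSemidef := fun p => by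
    simpa using ((hLap p).kronecker PosSemidef.one).conjTranspose_mul_mul_same U
  exact exists_exp_decay_of_gramian_lower_bound hQ (fun t => hM (σ t))
    ((Set.finite_range _).subset (Set.range_comp_subset_range σ
      fun p => Uᵀ * (Lap p ⊗ₖ (1 : Matrix (Fin n) (Fin n) ℝ)) * U)) hΦ0 hΦd hTo hα₁
    fun a ha v => (hGram a ha v).1

/-- Exponential stability of the switched system `η̇(t) = -Q Uᵀ(L_{σ(t)} ⊗ I_n)U η(t)`
with `Q` symmetric positive definite, assuming the uniform observability-Gramian bound
`α₁ I ≤ G_η(t*, t*+T_o) ≤ α₂ I` (expressed through the state transition matrix `Φ`):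
there exist `c, λ > 0` with `‖η(t)‖ ≤ c e^{-λ(t-t₀)} ‖η(t₀)‖` for every solution. -/
theorem eta_system_exponentially_stable
    {N n n₀ νt : ℕ}
    (U : Matrix (Fin N × Fin n) (Fin νt) ℝ)
    (Lap : Fin n₀ → Matrix (Fin N) (Fin N) ℝ)
    (hLap : ∀ p, (Lap p).PosSemidef)
    (σ : ℝ → Fin n₀)
    (Q : Matrix (Fin νt) (Fin νt) ℝ) (hQ : Q.PosDef)
    (Φ : ℝ → ℝ → Matrix (Fin νt) (Fin νt) ℝ)
    (hΦ0 : ∀ s, Φ s s = 1)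
    (hΦd : ∀ (s : ℝ) (w : EuclideanSpace ℝ (Fin νt)) (t : ℝ),
      HasDerivAt (fun u => Matrix.toEuclideanLin (Φ u s) w)
        (Matrix.toEuclideanLin
          (-(Q * (Uᵀ * (Lap (σ t) ⊗ₖ (1 : Matrix (Fin n) (Fin n) ℝ)) * U)) * Φ t s) w) t)
    (To α₁ α₂ : ℝ) (hTo : 0 < To) (hα₁ : 0 < α₁) (hα₁₂ : α₁ ≤ α₂)
    (hGram : ∀ tstar : ℝ, 0 ≤ tstar → ∀ v : Fin νt → ℝ,
      α₁ * (∑ i, v i ^ 2) ≤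
        (∫ t in tstar..(tstar + To),
          ((Φ t tstar).mulVec v) ⬝ᵥ
            ((Uᵀ * (Lap (σ t) ⊗ₖ (1 : Matrix (Fin n) (Fin n) ℝ)) * U).mulVec
              ((Φ t tstar).mulVec v))) ∧
      (∫ t in tstar..(tstar + To),
          ((Φ t tstar).mulVec v) ⬝ᵥ
            ((Uᵀ * (Lap (σ t) ⊗ₖ (1 : Matrix (Fin n) (Fin n) ℝ)) * U).mulVec
              ((Φ t tstar).mulVec v))) ≤ α₂ * (∑ i, v i ^ 2)) :
    ∃ c lam : ℝ, 0 < c ∧ 0 < lam ∧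
      ∀ η : ℝ → EuclideanSpace ℝ (Fin νt),
        (∀ t, HasDerivAt η
          (Matrix.toEuclideanLin
            (-(Q * (Uᵀ * (Lap (σ t) ⊗ₖ (1 : Matrix (Fin n) (Fin n) ℝ)) * U))) (η t)) t) →
        ∀ t₀ t : ℝ, 0 ≤ t₀ → t₀ ≤ t →
          ‖η t‖ ≤ c * Real.exp (-lam * (t - t₀)) * ‖η t₀‖ :=
  eta_system_exponentially_stable_general U Lap hLap σ Q hQ Φ hΦ0 hΦd To α₁ α₂ hTo hα₁ hGram
end

section
/- Let V(η) = ½ηᵀQ⁻¹η with Q symmetric positive definite, and suppose along trajectories of η̇ = -QUᵀ(L_{σ(t)} ⊗ I_n)Uη the derivative satisfies V̇(η(t)) = -η(t)ᵀUᵀ(L_{σ(t)} ⊗ I_n)Uη(t) ≤ 0, and the Gramian satisfies G_η(t*, t*+T_o) ≥ α₁I. Then V(η(t*+T_o)) ≤ (1 - ρ)V(η(t*)) for any ρ with 0 < ρ < min{2α₁λ_min(Q), 1}. -/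
open Matrix Kronecker
open scoped MatrixOrder ComplexOrder

/-!
Since every `L_p` is positive semidefinite, `V̇ = -ηᵀUᵀ(L_σ ⊗ I)Uη ≤ 0`; a derivative of constant
sign is integrable, so the fundamental theorem of calculus gives
`V(t* + T_o) = V(t*) - ∫ ηᵀUᵀ(L_σ ⊗ I)Uη`. Writing `η(t) = Φ(t) η(t*)`, the integral is the
Gramian quadratic form, hence at least `α₁ ‖η(t*)‖²`. Finally `Q⁻¹ ≤ λ_min(Q)⁻¹ I` in the Loewner
order, so `ρ V(η(t*)) ≤ α₁ ‖η(t*)‖²` whenever `ρ ≤ 2 α₁ λ_min(Q)`.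
-/

theorem intervalIntegral.integral_eq_sub_of_hasDerivAt_of_nonpos {f f' : ℝ → ℝ} {a b : ℝ}
    (hderiv : ∀ x ∈ Set.uIcc a b, HasDerivAt f (f' x) x)
    (hf' : ∀ x ∈ Set.Ioo (min a b) (max a b), f' x ≤ 0) :
    ∫ x in a..b, f' x = f b - f a := by
  refine integral_eq_sub_of_hasDerivAt hderiv ?_
  have hcont : ContinuousOn (-f) (Set.uIcc a b) := fun x hx =>
    (hderiv x hx).continuousAt.neg.continuousWithinAt
  simpa [Pi.neg_def] using (intervalIntegrable_deriv_of_nonneg hcont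
    (fun x hx => (hderiv x (Set.Ioo_subset_Icc_self hx)).neg)
    (fun x hx => neg_nonneg.mpr (hf' x hx))).neg

theorem Matrix.PosSemidef.conjTranspose_mul_kronecker_one_mul {𝕜 : Type*} [RCLike 𝕜]
    {m k l : Type*} [Fintype m] [Fintype k] [DecidableEq k] [Finite l]
    {L : Matrix m m 𝕜} (hL : L.PosSemidef) (U : Matrix (m × k) l 𝕜) :
    (Uᴴ * (L ⊗ₖ (1 : Matrix k k 𝕜)) * U).PosSemidef :=
  (hL.kronecker PosSemidef.one).conjTranspose_mul_mul_same U

namespace Matrix.PosDef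

variable {ι : Type*} [Fintype ι] [DecidableEq ι] {Q : Matrix ι ι ℝ}

theorem inv_le_algebraMap_inv (hQ : Q.PosDef) {c : ℝ} (hc : 0 < c)
    (hcQ : ∀ i, c ≤ hQ.1.eigenvalues i) : Q⁻¹ ≤ algebraMap ℝ _ c⁻¹ := by
  lift Q to (Matrix ι ι ℝ)ˣ using hQ.isUnit
  refine le_algebraMap_of_spectrum_le (fun x hx => ?_) hQ.inv.1
  rw [← coe_units_inv, ← spectrum.map_inv, Set.mem_inv,
    hQ.1.spectrum_real_eq_range_eigenvalues] at hx
  obtain ⟨i, hi⟩ := hx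
  rw [← inv_inv x, ← hi]
  exact inv_anti₀ hc (hcQ i)

theorem mul_dotProduct_inv_mulVec_le (hQ : Q.PosDef) {c : ℝ} (hc : 0 < c)
    (hcQ : ∀ i, c ≤ hQ.1.eigenvalues i) (v : ι → ℝ) :
    c * (v ⬝ᵥ Q⁻¹ *ᵥ v) ≤ v ⬝ᵥ v := by
  have h := (hQ.inv_le_algebraMap_inv hc hcQ).dotProduct_mulVec_nonneg v
  simp only [star_trivial, Algebra.algebraMap_eq_smul_one, sub_mulVec, smul_mulVec, one_mulVec,
    dotProduct_sub, dotProduct_smul, smul_eq_mul, sub_nonneg] at h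
  exact (le_inv_mul_iff₀ hc).mp h

end Matrix.PosDef

theorem lyapunov_one_window_contraction_general
    {N n n₀ νt : ℕ}
    (U : Matrix (Fin N × Fin n) (Fin νt) ℝ)
    (Lap : Fin n₀ → Matrix (Fin N) (Fin N) ℝ)
    (hLap : ∀ p, (Lap p).PosSemidef)
    (σ : ℝ → Fin n₀)
    (Q : Matrix (Fin νt) (Fin νt) ℝ) (hQ : Q.PosDef)
    (tstar To α₁ : ℝ) (hα₁ : 0 < α₁)
    (η : ℝ → Fin νt → ℝ)
    (Φ : ℝ → Matrix (Fin νt) (Fin νt) ℝ)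
    (hη : ∀ t, η t = (Φ t).mulVec (η tstar))
    (hVdot : ∀ t, HasDerivAt (fun s => (1 / 2 : ℝ) * (η s ⬝ᵥ Q⁻¹.mulVec (η s)))
      (-(η t ⬝ᵥ ((Uᵀ * (Lap (σ t) ⊗ₖ (1 : Matrix (Fin n) (Fin n) ℝ)) * U).mulVec (η t)))) t)
    (hGram : ∀ v : Fin νt → ℝ,
      α₁ * (∑ i, v i ^ 2) ≤
        ∫ t in tstar..(tstar + To),
          ((Φ t).mulVec v) ⬝ᵥ
            ((Uᵀ * (Lap (σ t) ⊗ₖ (1 : Matrix (Fin n) (Fin n) ℝ)) * U).mulVec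
              ((Φ t).mulVec v)))
    (ρ : ℝ) (hρ0 : 0 < ρ)
    (hρmin : ∀ i, ρ < 2 * α₁ * hQ.1.eigenvalues i) :
    (1 / 2 : ℝ) * (η (tstar + To) ⬝ᵥ Q⁻¹.mulVec (η (tstar + To))) ≤
      (1 - ρ) * ((1 / 2 : ℝ) * (η tstar ⬝ᵥ Q⁻¹.mulVec (η tstar))) := by
  have hdissipation : ∀ t, 0 ≤
      η t ⬝ᵥ (Uᵀ * (Lap (σ t) ⊗ₖ (1 : Matrix (Fin n) (Fin n) ℝ)) * U) *ᵥ η t := fun t => by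
    simpa [conjTranspose_eq_transpose_of_trivial] using
      ((hLap (σ t)).conjTranspose_mul_kronecker_one_mul U).dotProduct_mulVec_nonneg (η t)
  have hdecrease := intervalIntegral.integral_eq_sub_of_hasDerivAt_of_nonpos
    (a := tstar) (b := tstar + To) (fun t _ => hVdot t) fun t _ => neg_nonpos.mpr (hdissipation t)
  rw [intervalIntegral.integral_neg] at hdecrease
  have hobs := hGram (η tstar)
  simp only [← hη] at hobs
  have hc : ∀ i, ρ / (2 * α₁) ≤ hQ.1.eigenvalues i := fun i =>
    (div_le_iff₀' (by positivity)).mpr (hρmin i).le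
  have hcontract : ρ * (η tstar ⬝ᵥ Q⁻¹ *ᵥ η tstar) ≤ 2 * α₁ * ∑ i, η tstar i ^ 2 := by
    have h := hQ.mul_dotProduct_inv_mulVec_le (by positivity) hc (η tstar)
    have hnorm : η tstar ⬝ᵥ η tstar = ∑ i, η tstar i ^ 2 := by simp only [dotProduct, sq]
    rwa [div_mul_eq_mul_div, div_le_iff₀' (by positivity), hnorm] at h
  linarith

/-- One-window contraction of the Lyapunov function `V(η) = ½ ηᵀ Q⁻¹ η` along the
trajectory `η̇ = -Q Uᵀ(L_{σ(t)} ⊗ I_n)U η`: if `V̇(η(t)) = -η(t)ᵀUᵀ(L_{σ(t)} ⊗ I_n)Uη(t) ≤ 0`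
and the observability Gramian satisfies `G_η(t*, t*+T_o) ≥ α₁ I`, then
`V(η(t*+T_o)) ≤ (1-ρ) V(η(t*))` for any `0 < ρ < min{2 α₁ λ_min(Q), 1}`. -/
theorem lyapunov_one_window_contraction
    {N n n₀ νt : ℕ}
    (U : Matrix (Fin N × Fin n) (Fin νt) ℝ)
    (Lap : Fin n₀ → Matrix (Fin N) (Fin N) ℝ)
    (hLap : ∀ p, (Lap p).PosSemidef)
    (σ : ℝ → Fin n₀)
    (Q : Matrix (Fin νt) (Fin νt) ℝ) (hQ : Q.PosDef)
    (tstar To α₁ : ℝ) (htstar : 0 ≤ tstar) (hTo : 0 < To) (hα₁ : 0 < α₁)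
    (η : ℝ → Fin νt → ℝ)
    (Φ : ℝ → Matrix (Fin νt) (Fin νt) ℝ)
    (hΦ0 : Φ tstar = 1)
    (hη : ∀ t, η t = (Φ t).mulVec (η tstar))
    (hVdot : ∀ t, HasDerivAt (fun s => (1 / 2 : ℝ) * (η s ⬝ᵥ Q⁻¹.mulVec (η s)))
      (-(η t ⬝ᵥ ((Uᵀ * (Lap (σ t) ⊗ₖ (1 : Matrix (Fin n) (Fin n) ℝ)) * U).mulVec (η t)))) t)
    (hGram : ∀ v : Fin νt → ℝ,
      α₁ * (∑ i, v i ^ 2) ≤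
        ∫ t in tstar..(tstar + To),
          ((Φ t).mulVec v) ⬝ᵥ
            ((Uᵀ * (Lap (σ t) ⊗ₖ (1 : Matrix (Fin n) (Fin n) ℝ)) * U).mulVec
              ((Φ t).mulVec v)))
    (ρ : ℝ) (hρ0 : 0 < ρ) (hρ1 : ρ < 1)
    (hρmin : ∀ i, ρ < 2 * α₁ * hQ.1.eigenvalues i) :
    (1 / 2 : ℝ) * (η (tstar + To) ⬝ᵥ Q⁻¹.mulVec (η (tstar + To))) ≤
      (1 - ρ) * ((1 / 2 : ℝ) * (η tstar ⬝ᵥ Q⁻¹.mulVec (η tstar))) :=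
  lyapunov_one_window_contraction_general U Lap hLap σ Q hQ tstar To α₁ hα₁ η Φ hη hVdot hGram ρ hρ0
    hρmin
end

section
/- Consider ζ̇(t) = (A_ō - Γ Uᵀ(L_{σ(t)} ⊗ I_n)U)ζ(t), where A_ō = blockdiag(A_{1ō},…,A_{Nō}) with each A_{iō} skew-symmetric, Γ = blockdiag(γ₁I_{ν₁},…,γ_N I_{ν_N}) with γ_i > 0, AU_i = U_iA_{iō} for a skew-symmetric A, and U = blockdiag(U_1,…,U_N). If the transformed system η̇ = -ΓUᵀ(L_{σ(t)} ⊗ I_n)Uη is exponentially stable, then the ζ-system is exponentially stable, since η(t) = e^{-A_ō t}ζ(t) satisfies ‖η(t)‖ = ‖ζ(t)‖ for all t and η obeys the transformed dynamics. -/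
open Matrix Kronecker

/-- Exponential stability of a linear time-varying system `ż = M(t) z`. -/
def ExpStable {ι : Type*} [Fintype ι] [DecidableEq ι] (M : ℝ → Matrix ι ι ℝ) : Prop :=
  ∃ c lam : ℝ, 0 < c ∧ 0 < lam ∧
    ∀ z : ℝ → EuclideanSpace ℝ ι,
      (∀ t, HasDerivAt z (Matrix.toEuclideanLin (M t) (z t)) t) →
      ∀ t₀ t : ℝ, 0 ≤ t₀ → t₀ ≤ t → ‖z t‖ ≤ c * Real.exp (-lam * (t - t₀)) * ‖z t₀‖

/-!
Write `B(t) = Γ Uᵀ (L_{σ(t)} ⊗ I_n) U`. Transposing the intertwining relation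
`(I_N ⊗ A) U = U A_ō` and using skew-symmetry of `A` and `A_ō` gives `Uᵀ (I_N ⊗ A) = A_ō Uᵀ`;
together with `(I_N ⊗ A)(L ⊗ I_n) = (L ⊗ I_n)(I_N ⊗ A)` this makes `A_ō` commute with every
`B(t)`. Hence if `ζ̇ = (A_ō - B(t)) ζ`, then `η(t) = e^{-t A_ō} ζ(t)` satisfies `η̇ = -B(t) η`, and
`e^{-t A_ō}` is orthogonal, so `‖η(t)‖ = ‖ζ(t)‖` and the decay estimate for `η` is one for `ζ`.
-/

section SkewConjugation

variable {ι : Type*} [Fintype ι] [DecidableEq ι]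

theorem Matrix.transpose_exp_mul_exp_of_transpose_eq_neg {S : Matrix ι ι ℝ} (hS : Sᵀ = -S) :
    (NormedSpace.exp S)ᵀ * NormedSpace.exp S = 1 := by
  rw [← Matrix.exp_transpose, hS, Matrix.exp_neg,
    Matrix.nonsing_inv_mul _ ((Matrix.isUnit_iff_isUnit_det _).mp (Matrix.isUnit_exp S))]

theorem Matrix.norm_toEuclideanLin_of_transpose_mul_self {O : Matrix ι ι ℝ} (hO : Oᵀ * O = 1)
    (x : EuclideanSpace ℝ ι) : ‖toEuclideanLin O x‖ = ‖x‖ := by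
  have hU : toEuclideanCLM (𝕜 := ℝ) (n := ι) O ∈ unitary _ :=
    Unitary.map_mem _ <| Matrix.mem_unitaryGroup_iff'.mpr <| by
      rwa [star_eq_conjTranspose, conjTranspose_eq_transpose_of_trivial]
  exact ContinuousLinearMap.norm_map_of_mem_unitary hU x

theorem Matrix.toEuclideanLin_mul_apply (A B : Matrix ι ι ℝ) (x : EuclideanSpace ℝ ι) :
    toEuclideanLin (A * B) x = toEuclideanLin A (toEuclideanLin B x) := by
  change toEuclideanCLM (𝕜 := ℝ) (A * B) x = _
  rw [map_mul]
  rfl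

theorem Matrix.hasDerivAt_toEuclideanLin_exp_smul_apply (S : Matrix ι ι ℝ)
    {z : ℝ → EuclideanSpace ℝ ι} {z' : EuclideanSpace ℝ ι} {t : ℝ} (hz : HasDerivAt z z' t) :
    HasDerivAt (fun s => toEuclideanLin (NormedSpace.exp (s • S)) (z s))
      (toEuclideanLin (NormedSpace.exp (t • S)) (toEuclideanLin S (z t) + z')) t := by
  -- Any norm inducing the product topology would do; this one makes the matrices a normed algebra.
  let := Matrix.linftyOpNormedRing (n := ι) (α := ℝ)
  let := Matrix.linftyOpNormedAlgebra (n := ι) (R := ℝ) (α := ℝ)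
  let T : Matrix ι ι ℝ →L[ℝ] EuclideanSpace ℝ ι →L[ℝ] EuclideanSpace ℝ ι :=
    LinearMap.toContinuousLinearMap (toEuclideanCLM (𝕜 := ℝ) (n := ι)).toAlgEquiv.toLinearMap
  have hexp := T.hasFDerivAt.comp_hasDerivAt t (hasDerivAt_exp_smul_const S t)
  refine (hexp.clm_apply hz).congr_deriv ?_
  rw [map_add, ← toEuclideanLin_mul_apply]
  rfl

theorem ExpStable.add_skew_of_commute {S : Matrix ι ι ℝ} (hS : Sᵀ = -S) {M : ℝ → Matrix ι ι ℝ}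
    (hcomm : ∀ t, Commute S (M t)) (h : ExpStable M) : ExpStable fun t => S + M t := by
  obtain ⟨c, lam, hc, hlam, hbound⟩ := h
  refine ⟨c, lam, hc, hlam, fun ζ hζ t₀ t ht₀ htt => ?_⟩
  have horth : ∀ s : ℝ, (NormedSpace.exp (s • -S))ᵀ * NormedSpace.exp (s • -S) = 1 := fun s =>
    transpose_exp_mul_exp_of_transpose_eq_neg (by rw [transpose_smul, transpose_neg, hS, smul_neg])
  have hη : ∀ s, HasDerivAt (fun s => toEuclideanLin (NormedSpace.exp (s • -S)) (ζ s))
      (toEuclideanLin (M s) (toEuclideanLin (NormedSpace.exp (s • -S)) (ζ s))) s := by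
    intro s
    convert hasDerivAt_toEuclideanLin_exp_smul_apply (-S) (hζ s) using 1
    beta_reduce
    rw [← LinearMap.add_apply, ← map_add, neg_add_cancel_left,
      ← toEuclideanLin_mul_apply, ← toEuclideanLin_mul_apply,
      ((hcomm s).neg_left.smul_left s).exp_left.eq]
  simpa only [norm_toEuclideanLin_of_transpose_mul_self (horth _)] using
    hbound _ hη t₀ t ht₀ htt

end SkewConjugation

theorem Matrix.commute_transpose_mul_mul_of_mul_eq_mul {m n R : Type*} [Fintype m] [Fintype n]
    [CommRing R] {W K : Matrix m m R} {S : Matrix n n R} {V : Matrix m n R}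
    (hW : Wᵀ = -W) (hS : Sᵀ = -S) (hWV : W * V = V * S) (hWK : Commute W K) :
    Commute S (Vᵀ * K * V) := by
  have hVW : Vᵀ * W = S * Vᵀ := by
    simpa [Matrix.transpose_mul, hW, hS] using congrArg Matrix.transpose hWV
  calc S * (Vᵀ * K * V) = Vᵀ * (W * K) * V := by
        rw [← Matrix.mul_assoc S, ← Matrix.mul_assoc S, ← hVW]; simp only [Matrix.mul_assoc]
    _ = Vᵀ * K * (W * V) := by rw [hWK.eq]; simp only [Matrix.mul_assoc]
    _ = Vᵀ * K * V * S := by rw [hWV]; simp only [Matrix.mul_assoc]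

theorem Commute.kronecker {l m R : Type*} [Fintype l] [Fintype m] [CommSemiring R]
    {A A' : Matrix l l R} {B B' : Matrix m m R} (hA : Commute A A') (hB : Commute B B') :
    Commute (A ⊗ₖ B) (A' ⊗ₖ B') := by
  rw [Commute, SemiconjBy, ← mul_kronecker_mul, ← mul_kronecker_mul, hA.eq, hB.eq]

theorem Matrix.commute_blockDiagonal' {o R : Type*} {m : o → Type*} [DecidableEq o]
    [Fintype o] [∀ i, Fintype (m i)] [∀ i, DecidableEq (m i)] [Semiring R]
    {M M' : ∀ i, Matrix (m i) (m i) R} (h : ∀ i, Commute (M i) (M' i)) :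
    Commute (blockDiagonal' M) (blockDiagonal' M') := by
  rw [Commute, SemiconjBy, ← blockDiagonal'_mul, ← blockDiagonal'_mul, funext fun i => (h i).eq]

section BlockDiagU

variable {N n : ℕ} {ν : Fin N → ℕ}

theorem one_kronecker_mul_blockDiagU (A : Matrix (Fin n) (Fin n) ℝ)
    (U : ∀ i, Matrix (Fin n) (Fin (ν i)) ℝ) :
    ((1 : Matrix (Fin N) (Fin N) ℝ) ⊗ₖ A) * blockDiagU U = blockDiagU fun i => A * U i := by
  ext ⟨i, k⟩ ⟨j, l⟩
  by_cases hij : i = j <;> simp [blockDiagU, mul_apply, Fintype.sum_prod_type, one_apply, hij]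

theorem blockDiagU_mul_blockDiagonal' (U : ∀ i, Matrix (Fin n) (Fin (ν i)) ℝ)
    (B : ∀ i, Matrix (Fin (ν i)) (Fin (ν i)) ℝ) :
    blockDiagU U * blockDiagonal' B = blockDiagU fun i => U i * B i := by
  ext ⟨i, k⟩ ⟨j, l⟩
  simp only [blockDiagU, mul_apply, of_apply, ← Finset.univ_sigma_univ, Finset.sum_sigma]
  rw [Fintype.sum_eq_single j fun j' hj' => Finset.sum_eq_zero fun _ _ => by
    rw [blockDiagonal'_apply_ne _ _ _ hj', mul_zero]]
  split_ifs <;> simp [blockDiagonal'_apply_eq]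

end BlockDiagU

theorem zeta_system_exponentially_stable_general
    {N n n₀ : ℕ} {ν : Fin N → ℕ}
    (A : Matrix (Fin n) (Fin n) ℝ) (hA : Aᵀ = -A)
    (U : ∀ i, Matrix (Fin n) (Fin (ν i)) ℝ)
    (Aob : ∀ i, Matrix (Fin (ν i)) (Fin (ν i)) ℝ)
    (hAob : ∀ i, (Aob i)ᵀ = -(Aob i))
    (hintw : ∀ i, A * U i = U i * Aob i)
    (γ : Fin N → ℝ)
    (Lap : Fin n₀ → Matrix (Fin N) (Fin N) ℝ)
    (σ : ℝ → Fin n₀)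
    (hη : ExpStable (fun t =>
      -(Matrix.blockDiagonal' (fun i => γ i • (1 : Matrix (Fin (ν i)) (Fin (ν i)) ℝ)) *
        ((blockDiagU U)ᵀ * (Lap (σ t) ⊗ₖ (1 : Matrix (Fin n) (Fin n) ℝ)) * blockDiagU U)))) :
    ExpStable (fun t =>
      Matrix.blockDiagonal' Aob -
      Matrix.blockDiagonal' (fun i => γ i • (1 : Matrix (Fin (ν i)) (Fin (ν i)) ℝ)) *
        ((blockDiagU U)ᵀ * (Lap (σ t) ⊗ₖ (1 : Matrix (Fin n) (Fin n) ℝ)) * blockDiagU U)) := by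
  have hAobT : (blockDiagonal' Aob)ᵀ = -blockDiagonal' Aob := by
    rw [blockDiagonal'_transpose, funext hAob]
    exact blockDiagonal'_neg Aob
  have hAT : ((1 : Matrix (Fin N) (Fin N) ℝ) ⊗ₖ A)ᵀ = -((1 : Matrix (Fin N) (Fin N) ℝ) ⊗ₖ A) := by
    rw [← kroneckerMap_transpose, transpose_one, hA, ← neg_one_smul ℝ A, kronecker_smul,
      neg_one_smul]
  have hintw' : ((1 : Matrix (Fin N) (Fin N) ℝ) ⊗ₖ A) * blockDiagU U
      = blockDiagU U * blockDiagonal' Aob := by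
    rw [one_kronecker_mul_blockDiagU, blockDiagU_mul_blockDiagonal', funext hintw]
  have hcomm : ∀ t, Commute (blockDiagonal' Aob)
      (-(blockDiagonal' (fun i => γ i • (1 : Matrix (Fin (ν i)) (Fin (ν i)) ℝ)) *
        ((blockDiagU U)ᵀ * (Lap (σ t) ⊗ₖ (1 : Matrix (Fin n) (Fin n) ℝ)) * blockDiagU U))) :=
    fun t => Commute.neg_right <| Commute.mul_right
      (commute_blockDiagonal' fun i => (Commute.one_right _).smul_right _)
      (commute_transpose_mul_mul_of_mul_eq_mul hAT hAobT hintw'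
        ((Commute.one_left _).kronecker (Commute.one_right _)))
  simpa only [sub_eq_add_neg] using hη.add_skew_of_commute hAobT hcomm

/-- If the transformed system `η̇ = -Γ Uᵀ(L_{σ(t)} ⊗ I_n)U η` is exponentially stable, then
so is `ζ̇ = (A_ō - Γ Uᵀ(L_{σ(t)} ⊗ I_n)U) ζ`, where `A_ō = blockdiag(A_{1ō},…,A_{Nō})` with
each `A_{iō}` skew-symmetric, `Γ = blockdiag(γ₁I,…,γ_N I)` with `γᵢ > 0`, `A` is
skew-symmetric and `A Uᵢ = Uᵢ A_{iō}` (so that `η(t) = e^{-A_ō t} ζ(t)` is norm-preserving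
and obeys the transformed dynamics). -/
theorem zeta_system_exponentially_stable
    {N n n₀ : ℕ} {ν : Fin N → ℕ}
    (A : Matrix (Fin n) (Fin n) ℝ) (hA : Aᵀ = -A)
    (U : ∀ i, Matrix (Fin n) (Fin (ν i)) ℝ)
    (Aob : ∀ i, Matrix (Fin (ν i)) (Fin (ν i)) ℝ)
    (hAob : ∀ i, (Aob i)ᵀ = -(Aob i))
    (hintw : ∀ i, A * U i = U i * Aob i)
    (γ : Fin N → ℝ) (hγ : ∀ i, 0 < γ i)
    (Lap : Fin n₀ → Matrix (Fin N) (Fin N) ℝ)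
    (hLap : ∀ p, (Lap p).PosSemidef)
    (σ : ℝ → Fin n₀)
    (hη : ExpStable (fun t =>
      -(Matrix.blockDiagonal' (fun i => γ i • (1 : Matrix (Fin (ν i)) (Fin (ν i)) ℝ)) *
        ((blockDiagU U)ᵀ * (Lap (σ t) ⊗ₖ (1 : Matrix (Fin n) (Fin n) ℝ)) * blockDiagU U)))) :
    ExpStable (fun t =>
      Matrix.blockDiagonal' Aob -
      Matrix.blockDiagonal' (fun i => γ i • (1 : Matrix (Fin (ν i)) (Fin (ν i)) ℝ)) *
        ((blockDiagU U)ᵀ * (Lap (σ t) ⊗ₖ (1 : Matrix (Fin n) (Fin n) ℝ)) * blockDiagU U)) :=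
  zeta_system_exponentially_stable_general A hA U Aob hAob hintw γ Lap σ hη
end

section
/- With T_i = [D_i U_i] orthogonal, L_i = T_i col(L_{io}, 0), M_i = T_i diag(0, I_{ν_i}) T_iᵀ, and the decomposition T_iᵀAT_i = diag(A_{io}, A_{iō}), C_iT_i = [C_{io} 0], the coordinates ξ_{io} = D_iᵀe_i, ξ_{iō} = U_iᵀe_i transform the error dynamics ė_i = (A - L_iC_i)e_i - γ_iM_iΣ_j l_{ij}e_j into the triangular form ξ̇_{io} = (A_{io} - L_{io}C_{io})ξ_{io} and ξ̇_{iō} = A_{iō}ξ_{iō} - γ_iU_iᵀΣ_j l_{ij}(D_jξ_{jo} + U_jξ_{jō}). -/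
/-! Since `D Dᵀ + U Uᵀ = 1`, every matrix `X` with `X U = 0` factors as `X = (X D) Dᵀ`, and
symmetrically with `D` and `U` exchanged. Together with the block conditions this makes `Dᵀ` and
`Uᵀ` intertwine `A - D L C` with the diagonal blocks, while the coupling term `U Uᵀ (…)` is killed
by `Dᵀ` and left unchanged by `Uᵀ`; differentiating `Dᵀ eᵢ` and `Uᵀ eᵢ` then gives the triangular
form. -/

open Matrix

theorem Matrix.hasDerivAt_mulVec {m n : Type*} [Fintype m] [Fintype n] (M : Matrix m n ℝ)
    {f : ℝ → n → ℝ} {f' : n → ℝ} {t : ℝ} (hf : HasDerivAt f f' t) :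
    HasDerivAt (fun s => M *ᵥ f s) (M *ᵥ f') t := by
  simpa [Function.comp_def] using
    ((mulVecLin M).toContinuousLinearMap.hasFDerivAt (x := f t)).comp_hasDerivAt t hf

section ObservableDecomposition

variable {R k p q n : Type*} [CommRing R] [Fintype n] [DecidableEq n] [Fintype p] [Fintype q]
  {D : Matrix n p R} {U : Matrix n q R}

theorem Matrix.mulVec_transpose_add_mulVec_transpose (hcomplete : D * Dᵀ + U * Uᵀ = 1)
    (v : n → R) : D *ᵥ (Dᵀ *ᵥ v) + U *ᵥ (Uᵀ *ᵥ v) = v := by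
  rw [mulVec_mulVec, mulVec_mulVec, ← add_mulVec, hcomplete, one_mulVec]

theorem Matrix.mul_mul_transpose_eq_self {X : Matrix k n R} (hcomplete : D * Dᵀ + U * Uᵀ = 1)
    (hXU : X * U = 0) : X * D * Dᵀ = X := by
  rw [← add_zero (X * D * Dᵀ), ← Matrix.zero_mul Uᵀ, ← hXU, Matrix.mul_assoc, Matrix.mul_assoc,
    ← Matrix.mul_add, hcomplete, Matrix.mul_one]

variable [Fintype k]

theorem Matrix.transpose_mul_sub_eq_observable_mul [DecidableEq p] (A : Matrix n n R)
    (C : Matrix k n R) (L : Matrix p k R) (hD : Dᵀ * D = 1) (hcomplete : D * Dᵀ + U * Uᵀ = 1)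
    (hblock : Dᵀ * A * U = 0) (hCU : C * U = 0) :
    Dᵀ * (A - D * L * C) = (Dᵀ * A * D - L * (C * D)) * Dᵀ := by
  have hA : Dᵀ * A * D * Dᵀ = Dᵀ * A := mul_mul_transpose_eq_self hcomplete hblock
  have hC : C * D * Dᵀ = C := mul_mul_transpose_eq_self hcomplete hCU
  rw [Matrix.sub_mul, hA, Matrix.mul_assoc L, hC, Matrix.mul_sub, ← Matrix.mul_assoc,
    ← Matrix.mul_assoc, hD, Matrix.one_mul]

theorem Matrix.transpose_mul_sub_eq_unobservable_mul (A : Matrix n n R) (C : Matrix k n R)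
    (L : Matrix p k R) (hDU : Dᵀ * U = 0) (hcomplete : D * Dᵀ + U * Uᵀ = 1)
    (hblock : Uᵀ * A * D = 0) :
    Uᵀ * (A - D * L * C) = Uᵀ * A * U * Uᵀ := by
  have hUD : Uᵀ * D = 0 := by simpa using congrArg transpose hDU
  rw [mul_mul_transpose_eq_self (add_comm (D * Dᵀ) _ ▸ hcomplete) hblock, Matrix.mul_sub,
    ← Matrix.mul_assoc, ← Matrix.mul_assoc, hUD, Matrix.zero_mul, Matrix.zero_mul, sub_zero]

end ObservableDecomposition

/-- With `Tᵢ = [Dᵢ Uᵢ]` orthogonal, `Lᵢ = Dᵢ L_{io}`, `Mᵢ = UᵢUᵢᵀ`, and the decomposition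
`DᵢᵀAUᵢ = 0`, `UᵢᵀADᵢ = 0`, `CᵢUᵢ = 0`, the coordinates `ξ_{io} = Dᵢᵀeᵢ`, `ξ_{iō} = Uᵢᵀeᵢ`
transform the error dynamics `ėᵢ = (A - LᵢCᵢ)eᵢ - γᵢMᵢ Σⱼ lᵢⱼ eⱼ` into the triangular
form `ξ̇_{io} = (A_{io} - L_{io}C_{io})ξ_{io}` and
`ξ̇_{iō} = A_{iō}ξ_{iō} - γᵢUᵢᵀ Σⱼ lᵢⱼ (Dⱼξ_{jo} + Uⱼξ_{jō})`, where
`A_{io} = DᵢᵀADᵢ`, `A_{iō} = UᵢᵀAUᵢ`, `C_{io} = CᵢDᵢ`. -/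
theorem error_dynamics_triangular_form
    {N n : ℕ} {m μ ν : Fin N → ℕ}
    (A : Matrix (Fin n) (Fin n) ℝ)
    (C : ∀ i, Matrix (Fin (m i)) (Fin n) ℝ)
    (D : ∀ i, Matrix (Fin n) (Fin (μ i)) ℝ)
    (U : ∀ i, Matrix (Fin n) (Fin (ν i)) ℝ)
    (hD : ∀ i, (D i)ᵀ * D i = 1)
    (hU : ∀ i, (U i)ᵀ * U i = 1)
    (hDU : ∀ i, (D i)ᵀ * U i = 0)
    (hcomplete : ∀ i, D i * (D i)ᵀ + U i * (U i)ᵀ = 1)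
    (hblock₁ : ∀ i, (D i)ᵀ * A * U i = 0)
    (hblock₂ : ∀ i, (U i)ᵀ * A * D i = 0)
    (hCU : ∀ i, C i * U i = 0)
    (Lio : ∀ i, Matrix (Fin (μ i)) (Fin (m i)) ℝ)
    (γ : Fin N → ℝ)
    (l : ℝ → Fin N → Fin N → ℝ)
    (e : Fin N → ℝ → Fin n → ℝ)
    (he : ∀ i t, HasDerivAt (e i)
      ((A - (D i * Lio i) * C i).mulVec (e i t) -
        γ i • ((U i * (U i)ᵀ).mulVec (∑ j, l t i j • e j t))) t) :
    ∀ i t,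
      HasDerivAt (fun s => (D i)ᵀ.mulVec (e i s))
        (((D i)ᵀ * A * D i - Lio i * (C i * D i)).mulVec ((D i)ᵀ.mulVec (e i t))) t ∧
      HasDerivAt (fun s => (U i)ᵀ.mulVec (e i s))
        (((U i)ᵀ * A * U i).mulVec ((U i)ᵀ.mulVec (e i t)) -
          γ i • (U i)ᵀ.mulVec (∑ j, l t i j •
            ((D j).mulVec ((D j)ᵀ.mulVec (e j t)) +
              (U j).mulVec ((U j)ᵀ.mulVec (e j t))))) t := by
  intro i t
  constructor
  · convert hasDerivAt_mulVec (D i)ᵀ (he i t) using 1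
    rw [mulVec_sub, mulVec_smul, mulVec_mulVec, mulVec_mulVec, mulVec_mulVec,
      ← transpose_mul_sub_eq_observable_mul A (C i) (Lio i) (hD i) (hcomplete i) (hblock₁ i)
        (hCU i), ← Matrix.mul_assoc, hDU i, Matrix.zero_mul, zero_mulVec, smul_zero, sub_zero]
  · convert hasDerivAt_mulVec (U i)ᵀ (he i t) using 1
    simp only [mulVec_transpose_add_mulVec_transpose (hcomplete _)]
    rw [mulVec_sub, mulVec_smul, mulVec_mulVec, mulVec_mulVec, mulVec_mulVec,
      transpose_mul_sub_eq_unobservable_mul A (C i) (Lio i) (hDU i) (hcomplete i) (hblock₂ i),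
      ← Matrix.mul_assoc, hU i, Matrix.one_mul]
end
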